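/- Let c ≥ 0, μ ∈ ℝ, s > 0, and set Δ = 1 + 2cs². Let q(x) = exp(−c·(max(x,0))²)·φ(x; μ, s²) and Z = ∫ℝ q(x) dx, and define p₁ = [Φ(0; μ, s²)·φ(0; μ/Δ, s²/Δ)] / [Φ(0; μ, s²)·φ(0; μ/Δ, s²/Δ) + φ(0; μ, s²)·(1 − Φ(0; μ/Δ, s²/Δ))]. Then for every x ∈ ℝ, q(x)/Z = (1 − p₁) · [φ(x; μ/Δ, s²/Δ)/(1 − Φ(0; μ/Δ, s²/Δ))]·1{x > 0} + p₁ · [φ(x; μ, s²)/Φ(0; μ, s²)]·1{x ≤ 0}; that is, the normalized density q/Z is a two-component mixture, with weight p₁, of the normal N(μ, s²) truncated to (−∞, 0] and the normal N(μ/Δ, s²/Δ) truncated to (0, ∞). -/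

import Mathlib

open MeasureTheory Real

/-- The density of the normal distribution with mean `μ` and variance `s2`:
`φ(x; μ, s²) = (2πs²)^(−1/2)·exp(−(x−μ)²/(2s²))`. -/
noncomputable def normalPDF (μ s2 x : ℝ) : ℝ :=
  (2 * Real.pi * s2) ^ (-(1:ℝ)/2) * Real.exp (-(x - μ) ^ 2 / (2 * s2))

/-- The cumulative distribution function of the normal distribution with mean `μ`
and variance `s2`: `Φ(x; μ, s²) = ∫_{−∞}^x φ(t; μ, s²) dt`. -/
noncomputable def normalCDF (μ s2 x : ℝ) : ℝ :=
  ∫ t in Set.Iic x, normalPDF μ s2 t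

/-
On `x ≤ 0` the weight `exp (-c x²)` is not applied, so `q` is the `N(μ, s²)` density there. On
`x > 0`, completing the square in `-c x² - (x - μ)² / (2 s²)` shows that `q` is a constant multiple
of the `N(μ/Δ, s²/Δ)` density, the constant `φ(0; μ, s²) / φ(0; μ/Δ, s²/Δ)` being read off at
`x = 0`. Integrating over the two half lines gives
`Z = Φ(0; μ, s²) + φ(0; μ, s²) / φ(0; μ/Δ, s²/Δ) · (1 - Φ(0; μ/Δ, s²/Δ))`,
and the mixture formula is then an identity of fractions.
-/

noncomputable def tiltedNormalPDF (c μ s2 x : ℝ) : ℝ :=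
  exp (-c * max x 0 ^ 2) * normalPDF μ s2 x

section NormalPDF

variable {μ s2 : ℝ}

lemma normalPDF_pos (hs2 : 0 < s2) (x : ℝ) : 0 < normalPDF μ s2 x := by
  unfold normalPDF
  positivity

lemma normalPDF_eq_gaussianPDFReal (hs2 : 0 < s2) :
    normalPDF μ s2 = ProbabilityTheory.gaussianPDFReal μ ⟨s2, hs2.le⟩ := by
  funext x
  simp only [normalPDF, ProbabilityTheory.gaussianPDFReal]
  rw [show (-(1:ℝ)/2) = -(1/2 : ℝ) by ring, rpow_neg (by positivity), ← sqrt_eq_rpow]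
  rfl

lemma integrable_normalPDF (hs2 : 0 < s2) : Integrable (normalPDF μ s2) := by
  rw [normalPDF_eq_gaussianPDFReal hs2]
  exact ProbabilityTheory.integrable_gaussianPDFReal _ _

lemma integral_normalPDF (hs2 : 0 < s2) : ∫ x, normalPDF μ s2 x = 1 := by
  rw [normalPDF_eq_gaussianPDFReal hs2]
  exact ProbabilityTheory.integral_gaussianPDFReal_eq_one μ
    fun h => hs2.ne' (congrArg Subtype.val h)

lemma setIntegral_normalPDF_pos (hs2 : 0 < s2) {S : Set ℝ} (hvol : 0 < volume S) :
    0 < ∫ x in S, normalPDF μ s2 x := by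
  have hsupp : Function.support (normalPDF μ s2) = Set.univ :=
    Set.eq_univ_of_forall fun x => (normalPDF_pos hs2 x).ne'
  rw [setIntegral_pos_iff_support_of_nonneg_ae
    (ae_of_all _ fun x => (normalPDF_pos hs2 x).le) (integrable_normalPDF hs2).integrableOn,
    hsupp, Set.univ_inter]
  exact hvol

lemma normalCDF_pos (hs2 : 0 < s2) (a : ℝ) : 0 < normalCDF μ s2 a :=
  setIntegral_normalPDF_pos hs2 (S := Set.Iic a) (by simp [volume_Iic])

lemma one_sub_normalCDF (hs2 : 0 < s2) (a : ℝ) :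
    1 - normalCDF μ s2 a = ∫ x in Set.Ioi a, normalPDF μ s2 x := by
  rw [← integral_normalPDF (μ := μ) hs2, normalCDF,
    ← intervalIntegral.integral_Iic_add_Ioi (b := a) (integrable_normalPDF hs2).integrableOn
      (integrable_normalPDF hs2).integrableOn]
  ring

lemma one_sub_normalCDF_pos (hs2 : 0 < s2) (a : ℝ) : 0 < 1 - normalCDF μ s2 a := by
  rw [one_sub_normalCDF hs2]
  exact setIntegral_normalPDF_pos hs2 (S := Set.Ioi a) (by simp [volume_Ioi])

end NormalPDF

/-- Completing the square in the exponent. -/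
lemma exp_mul_normalPDF_mul_normalPDF_zero {c μ s2 Δ : ℝ} (hs2 : s2 ≠ 0) (hΔ0 : Δ ≠ 0)
    (hΔ : Δ = 1 + 2 * c * s2) (y : ℝ) :
    exp (-c * y ^ 2) * normalPDF μ s2 y * normalPDF (μ / Δ) (s2 / Δ) 0 =
      normalPDF μ s2 0 * normalPDF (μ / Δ) (s2 / Δ) y := by
  have hexp : -c * y ^ 2 + -(y - μ) ^ 2 / (2 * s2) + -(0 - μ / Δ) ^ 2 / (2 * (s2 / Δ)) =
      -(0 - μ) ^ 2 / (2 * s2) + -(y - μ / Δ) ^ 2 / (2 * (s2 / Δ)) := by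
    field_simp
    rw [hΔ]
    ring
  simp only [normalPDF]
  linear_combination (2 * π * s2) ^ (-(1:ℝ)/2) * (2 * π * (s2 / Δ)) ^ (-(1:ℝ)/2) *
    (by simpa only [exp_add] using congrArg exp hexp :
      exp (-c * y ^ 2) * exp (-(y - μ) ^ 2 / (2 * s2)) * exp (-(0 - μ / Δ) ^ 2 / (2 * (s2 / Δ))) =
        exp (-(0 - μ) ^ 2 / (2 * s2)) * exp (-(y - μ / Δ) ^ 2 / (2 * (s2 / Δ))))

section TiltedNormalPDF

variable {c μ s2 : ℝ}

lemma tiltedNormalPDF_of_nonpos {x : ℝ} (hx : x ≤ 0) :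
    tiltedNormalPDF c μ s2 x = normalPDF μ s2 x := by
  simp [tiltedNormalPDF, max_eq_right hx]

lemma tiltedNormalPDF_of_pos {Δ : ℝ} (hc : 0 ≤ c) (hs2 : 0 < s2) (hΔ : Δ = 1 + 2 * c * s2)
    {x : ℝ} (hx : 0 < x) :
    tiltedNormalPDF c μ s2 x =
      normalPDF μ s2 0 / normalPDF (μ / Δ) (s2 / Δ) 0 * normalPDF (μ / Δ) (s2 / Δ) x := by
  have hΔpos : 0 < Δ := by rw [hΔ]; positivity
  rw [tiltedNormalPDF, max_eq_left hx.le, div_mul_eq_mul_div,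
    eq_div_iff (normalPDF_pos (div_pos hs2 hΔpos) 0).ne']
  exact exp_mul_normalPDF_mul_normalPDF_zero hs2.ne' hΔpos.ne' hΔ x

lemma integrable_tiltedNormalPDF (hc : 0 ≤ c) (hs2 : 0 < s2) :
    Integrable (tiltedNormalPDF c μ s2) := by
  refine (integrable_normalPDF hs2).bdd_mul (c := 1) (by fun_prop) (ae_of_all _ fun x => ?_)
  rw [norm_of_nonneg (exp_pos _).le, exp_le_one_iff]
  have : 0 ≤ c * max x 0 ^ 2 := by positivity
  linarith

lemma integral_tiltedNormalPDF {Δ : ℝ} (hc : 0 ≤ c) (hs2 : 0 < s2) (hΔ : Δ = 1 + 2 * c * s2) :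
    ∫ x, tiltedNormalPDF c μ s2 x = normalCDF μ s2 0 +
      normalPDF μ s2 0 / normalPDF (μ / Δ) (s2 / Δ) 0 * (1 - normalCDF (μ / Δ) (s2 / Δ) 0) := by
  have hΔpos : 0 < Δ := by rw [hΔ]; positivity
  have hq := integrable_tiltedNormalPDF (μ := μ) hc hs2
  rw [← intervalIntegral.integral_Iic_add_Ioi hq.integrableOn hq.integrableOn,
    one_sub_normalCDF (div_pos hs2 hΔpos), ← integral_const_mul, normalCDF,
    setIntegral_congr_fun measurableSet_Iic fun x hx => tiltedNormalPDF_of_nonpos hx,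
    setIntegral_congr_fun measurableSet_Ioi fun x hx => tiltedNormalPDF_of_pos hc hs2 hΔ hx]

end TiltedNormalPDF

/-- With `c ≥ 0`, `s > 0`, `Δ = 1 + 2cs²`, `q(x) = exp(−c·(max(x,0))²)·φ(x; μ, s²)`,
`Z = ∫ q`, and
`p₁ = Φ(0;μ,s²)·φ(0;μ/Δ,s²/Δ) / [Φ(0;μ,s²)·φ(0;μ/Δ,s²/Δ) + φ(0;μ,s²)·(1−Φ(0;μ/Δ,s²/Δ))]`,
the normalized density `q/Z` is the mixture
`(1−p₁)·[φ(x;μ/Δ,s²/Δ)/(1−Φ(0;μ/Δ,s²/Δ))]·1{x>0} + p₁·[φ(x;μ,s²)/Φ(0;μ,s²)]·1{x≤0}`. -/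
theorem stmt17 (c μ s : ℝ) (hc : 0 ≤ c) (hs : 0 < s)
    (Δ Z p₁ : ℝ) (q : ℝ → ℝ)
    (hΔ : Δ = 1 + 2 * c * s ^ 2)
    (hq : q = fun x => Real.exp (-c * (max x 0) ^ 2) * normalPDF μ (s ^ 2) x)
    (hZ : Z = ∫ x, q x)
    (hp₁ : p₁ = normalCDF μ (s ^ 2) 0 * normalPDF (μ / Δ) (s ^ 2 / Δ) 0 /
        (normalCDF μ (s ^ 2) 0 * normalPDF (μ / Δ) (s ^ 2 / Δ) 0 +
          normalPDF μ (s ^ 2) 0 * (1 - normalCDF (μ / Δ) (s ^ 2 / Δ) 0))) :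
    ∀ x : ℝ, q x / Z =
      (1 - p₁) * (normalPDF (μ / Δ) (s ^ 2 / Δ) x / (1 - normalCDF (μ / Δ) (s ^ 2 / Δ) 0)) *
          (if 0 < x then 1 else 0) +
        p₁ * (normalPDF μ (s ^ 2) x / normalCDF μ (s ^ 2) 0) * (if x ≤ 0 then 1 else 0) := by
  obtain rfl : q = tiltedNormalPDF c μ (s ^ 2) := hq
  have hs2 : 0 < s ^ 2 := by positivity
  have hΔpos : 0 < Δ := by rw [hΔ]; positivity
  rw [integral_tiltedNormalPDF hc hs2 hΔ] at hZ
  have hA := normalCDF_pos (μ := μ) hs2 0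
  have hB := normalPDF_pos (μ := μ / Δ) (div_pos hs2 hΔpos) 0
  have hC := normalPDF_pos (μ := μ) hs2 0
  have hD := one_sub_normalCDF_pos (μ := μ / Δ) (div_pos hs2 hΔpos) 0
  intro x
  rcases le_or_gt x 0 with hx | hx
  · rw [if_neg hx.not_gt, if_pos hx, tiltedNormalPDF_of_nonpos hx, hp₁, hZ]
    field_simp
    ring
  · rw [if_pos hx, if_neg hx.not_ge, tiltedNormalPDF_of_pos hc hs2 hΔ hx, hp₁, hZ]
    field_simp
    ring
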